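/- arXiv:2210.14998 — 4 statements merged into one kernel-verified Lean document; each statement's English description precedes it below -/
import Mathlib

section
/- Let μ : {1,...,K} → ℝ be a vector of mean losses, S_1,...,S_T ⊆ {1,...,K} nonempty availability sets, and k_t ∈ S_t played arms. Then for every ordering σ (permutation of {1,...,K}), Σ_{t=1}^T (μ(k_t) − μ(σ(S_t))) ≤ Σ_{i=1}^K Σ_{j : μ(j) ≤ μ(i)} Σ_{t=1}^T (μ(i) − μ(j))·1{k_t = i and j ∈ S_t}. (This is the deterministic mean-loss form of the statement: for i.i.d. losses, the expected ordering regret is bounded by the sum of expected internal sleeping regrets over the dominating pairs.) -/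
/-!
In each round, either the comparator arm `σ(S_t)` is no better than the played arm `k_t`, and the
round contributes a nonpositive ordering regret, or `(k_t, σ(S_t))` is a dominating pair that is
active in that round, and its internal-regret term is exactly the round's ordering regret. Every
other term on the right is nonnegative, so summing over the rounds gives the bound.
-/

/-- The best available arm in `S` according to the ordering `σ`:
the element of `S` with the smallest `σ`-rank, i.e. `σ` applied to the
smallest index `r` such that `σ r ∈ S`. -/
noncomputable def bestArm {K : ℕ} (σ : Equiv.Perm (Fin K)) (S : Finset (Fin K))
    (h : S.Nonempty) : Fin K :=
  σ ((S.image σ.symm).min' (h.image σ.symm))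

open Finset

lemma bestArm_mem {K : ℕ} (σ : Equiv.Perm (Fin K)) (S : Finset (Fin K)) (h : S.Nonempty) :
    bestArm σ S h ∈ S := by
  obtain ⟨x, hx, hx_eq⟩ := mem_image.mp ((S.image σ.symm).min'_mem (h.image σ.symm))
  rwa [bestArm, ← hx_eq, Equiv.apply_symm_apply]

section

variable {α : Type*} [Fintype α] [DecidableEq α] (μ : α → ℝ)

lemma sub_le_sum_dominating_pairs {a b : α} {S : Finset α} (hb : b ∈ S) :
    μ a - μ b ≤ ∑ i, ∑ j ∈ univ.filter (fun j => μ j ≤ μ i),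
      (μ i - μ j) * (if a = i ∧ j ∈ S then 1 else 0) := by
  have hterm : ∀ i, ∀ j ∈ univ.filter (fun j => μ j ≤ μ i),
      0 ≤ (μ i - μ j) * (if a = i ∧ j ∈ S then 1 else 0) :=
    fun i j hj => mul_nonneg (sub_nonneg.mpr (mem_filter.mp hj).2) (by split_ifs <;> norm_num)
  have hsum : 0 ≤ ∑ i, ∑ j ∈ univ.filter (fun j => μ j ≤ μ i),
      (μ i - μ j) * (if a = i ∧ j ∈ S then 1 else 0) :=
    sum_nonneg fun i _ => sum_nonneg (hterm i)
  by_cases hba : μ b ≤ μ a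
  · calc μ a - μ b = (μ a - μ b) * (if a = a ∧ b ∈ S then 1 else 0) := by simp [hb]
      _ ≤ ∑ j ∈ univ.filter (fun j => μ j ≤ μ a),
            (μ a - μ j) * (if a = a ∧ j ∈ S then 1 else 0) :=
          single_le_sum (hterm a) (mem_filter.mpr ⟨mem_univ b, hba⟩)
      _ ≤ _ := single_le_sum (fun i _ => sum_nonneg (hterm i)) (mem_univ a)
  · linarith

theorem sum_sub_le_sum_internal_regret {τ : Type*} [Fintype τ] (S : τ → Finset α) (k b : τ → α)
    (hb : ∀ t, b t ∈ S t) :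
    ∑ t, (μ (k t) - μ (b t)) ≤ ∑ i, ∑ j ∈ univ.filter (fun j => μ j ≤ μ i),
      ∑ t, (μ i - μ j) * (if k t = i ∧ j ∈ S t then 1 else 0) :=
  calc ∑ t, (μ (k t) - μ (b t))
      ≤ ∑ t, ∑ i, ∑ j ∈ univ.filter (fun j => μ j ≤ μ i),
          (μ i - μ j) * (if k t = i ∧ j ∈ S t then 1 else 0) :=
        sum_le_sum fun t _ => sub_le_sum_dominating_pairs μ (hb t)
    _ = _ := by
        rw [sum_comm]
        exact sum_congr rfl fun i _ => sum_comm

end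

theorem ordering_regret_le_sum_internal_general
    (K T : ℕ) (μ : Fin K → ℝ)
    (S : Fin T → Finset (Fin K)) (hS : ∀ t, (S t).Nonempty)
    (k : Fin T → Fin K)
    (σ : Equiv.Perm (Fin K)) :
    ∑ t, (μ (k t) - μ (bestArm σ (S t) (hS t)))
      ≤ ∑ i : Fin K, ∑ j ∈ Finset.univ.filter (fun j => μ j ≤ μ i),
          ∑ t, (μ i - μ j) * (if k t = i ∧ j ∈ S t then 1 else 0) :=
  sum_sub_le_sum_internal_regret μ S k _ fun t => bestArm_mem σ (S t) (hS t)

/-- **Internal regret implies ordering regret (deterministic mean-loss form).**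
For mean losses `μ`, nonempty availability sets `S t`, played arms `k t ∈ S t`,
and every ordering `σ`:
`Σ_t (μ(k_t) − μ(σ(S_t))) ≤ Σ_i Σ_{j : μ(j) ≤ μ(i)} Σ_t (μ(i) − μ(j))·1{k_t = i ∧ j ∈ S_t}`. -/
theorem ordering_regret_le_sum_internal
    (K T : ℕ) (μ : Fin K → ℝ)
    (S : Fin T → Finset (Fin K)) (hS : ∀ t, (S t).Nonempty)
    (k : Fin T → Fin K) (hk : ∀ t, k t ∈ S t)
    (σ : Equiv.Perm (Fin K)) :
    ∑ t, (μ (k t) - μ (bestArm σ (S t) (hS t)))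
      ≤ ∑ i : Fin K, ∑ j ∈ Finset.univ.filter (fun j => μ j ≤ μ i),
          ∑ t, (μ i - μ j) * (if k t = i ∧ j ∈ S t then 1 else 0) :=
  ordering_regret_le_sum_internal_general K T μ S hS k σ
end

section
/- For every even T ≥ 2 there is a sleeping MAB instance with K = 3 arms on which an algorithm has zero external sleeping regret against every arm but ordering regret T/2. Concretely, set ℓ_t(k) = k for all t and k ∈ {1,2,3}; S_t = {1,2} and k_t = 1 for t ≤ T/2; S_t = {2,3} and k_t = 3 for t > T/2. Then k_t ∈ S_t for all t, R_ext(k) = 0 for every k ∈ {1,2,3}, while the ordering regret against the identity ordering σ = (1,2,3) satisfies R_ordering(σ) = T/2. -/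
/-!
Every summand depends on `t` only through the phase `t < T / 2`, and the two phases have
`T / 2` rounds each. Against arm 2 (the only arm available in both phases) the play loses 1
per round in the first phase and gains 1 per round in the second, which cancels; arms 1 and 3
are awake only while they are themselves played. The identity ordering agrees with the play in
the first phase and picks arm 2 instead of arm 3 in the second.
-/

open Finset

theorem Finset.sum_range_ite_lt {M : Type*} [AddCommMonoid M] {m T : ℕ} (hmT : m ≤ T)
    (x y : M) : ∑ t ∈ range T, (if t < m then x else y) = m • x + (T - m) • y := by
  obtain ⟨n, rfl⟩ := Nat.exists_eq_add_of_le hmT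
  simp [sum_range_add, sum_ite_of_true, mem_range]

theorem Finset.sum_range_eq_half_nsmul_of_two_phase {M : Type*} [AddCommMonoid M] {T : ℕ}
    (hT : Even T) {f : ℕ → M} {x y : M} (hf : ∀ t, f t = if t < T / 2 then x else y) :
    ∑ t ∈ range T, f t = (T / 2) • (x + y) := by
  have hhalf : T - T / 2 = T / 2 := by obtain ⟨m, rfl⟩ := hT; omega
  rw [sum_congr rfl fun t _ => hf t, sum_range_ite_lt (Nat.div_le_self T 2), hhalf, nsmul_add]

theorem zero_external_but_linear_ordering_general
    (T : ℕ) (hTeven : Even T)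
    (ℓ : ℕ → Fin 3 → ℝ) (hℓ : ∀ t a, ℓ t a = (a : ℕ) + 1)
    (S : ℕ → Finset (Fin 3)) (hSdef : ∀ t, S t = if t < T / 2 then {0, 1} else {1, 2})
    (k : ℕ → Fin 3) (hkdef : ∀ t, k t = if t < T / 2 then 0 else 2)
    (hS : ∀ t, (S t).Nonempty) :
    (∀ t, k t ∈ S t) ∧
    (∀ a : Fin 3,
      ∑ t ∈ Finset.range T, (ℓ t (k t) - ℓ t a) * (if a ∈ S t then 1 else 0) = 0) ∧
    (∑ t ∈ Finset.range T, (ℓ t (k t) - ℓ t ((S t).min' (hS t))) = (T : ℝ) / 2) := by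
  refine ⟨fun t => ?_, fun a => ?_, ?_⟩
  · rw [hSdef, hkdef]
    split_ifs <;> decide
  · have hsummand : ∀ t, (ℓ t (k t) - ℓ t a) * (if a ∈ S t then 1 else 0) =
        if t < T / 2 then (if a = 1 then -1 else 0) else (if a = 1 then 1 else 0) := by
      intro t
      rw [hℓ, hℓ, hSdef, hkdef]
      by_cases h : t < T / 2 <;> fin_cases a <;> norm_num [h, Fin.ext_iff]
    rw [sum_range_eq_half_nsmul_of_two_phase hTeven hsummand]
    split_ifs <;> simp
  · have hmin : ∀ t, (S t).min' (hS t) = if t < T / 2 then 0 else 1 := by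
      intro t
      simp only [hSdef]
      split_ifs <;> rfl
    have hsummand : ∀ t, ℓ t (k t) - ℓ t ((S t).min' (hS t)) = if t < T / 2 then 0 else 1 := by
      intro t
      rw [hmin, hℓ, hℓ, hkdef]
      split_ifs <;> norm_num
    rw [sum_range_eq_half_nsmul_of_two_phase hTeven hsummand, zero_add, nsmul_one,
      Nat.cast_div hTeven.two_dvd two_ne_zero, Nat.cast_ofNat]

/-- **Zero external sleeping regret but linear ordering regret (adversarial availabilities).**
With K = 3 arms, losses `ℓ_t(k) = k` (arm values 1,2,3), availabilities
`S_t = {1,2}` and plays `k_t = 1` for `t < T/2`, `S_t = {2,3}` and plays `k_t = 3` afterwards: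
the plays are always available, the external sleeping regret is 0 against every arm,
while the ordering regret against the identity ordering (which picks the smallest
available arm, i.e. `(S t).min'`) equals `T/2`. -/
theorem zero_external_but_linear_ordering
    (T : ℕ) (hT : 2 ≤ T) (hTeven : Even T)
    (ℓ : ℕ → Fin 3 → ℝ) (hℓ : ∀ t a, ℓ t a = (a : ℕ) + 1)
    (S : ℕ → Finset (Fin 3)) (hSdef : ∀ t, S t = if t < T / 2 then {0, 1} else {1, 2})
    (k : ℕ → Fin 3) (hkdef : ∀ t, k t = if t < T / 2 then 0 else 2)
    (hS : ∀ t, (S t).Nonempty) :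
    (∀ t, k t ∈ S t) ∧
    (∀ a : Fin 3,
      ∑ t ∈ Finset.range T, (ℓ t (k t) - ℓ t a) * (if a ∈ S t then 1 else 0) = 0) ∧
    (∑ t ∈ Finset.range T, (ℓ t (k t) - ℓ t ((S t).min' (hS t))) = (T : ℝ) / 2) :=
  zero_external_but_linear_ordering_general T hTeven ℓ hℓ S hSdef k hkdef hS
end

section
/- Let K ≥ 2, let S ⊆ {1,...,K} be nonempty, let E = {(i,j) : i ≠ j}, let q̃ : E → [0,1] with Σ_{(i,j)∈E} q̃(i,j) = 1, set Q̃ = Σ_{(i,j)∈E} q̃(i,j)·1{j ∈ S} and assume Q̃ > 0, and define q(i,j) = q̃(i,j)·1{j ∈ S}/Q̃. Let p be a probability vector with p(k) > 0 for k ∈ S and p(k) = 0 for k ∉ S satisfying the fixed-point equation p = Σ_{(i,j)∈E} q(i,j)·p^{i→j}, and let ℓ : {1,...,K} → ℝ. Then the expected aggregated estimated loss equals the expected loss of the played arm: Σ_{a∈S} p(a)·Σ_{(i,j)∈E} q̃(i,j)·ℓ̂_a(i→j) = Σ_{k∈S} p(k)·ℓ(k). -/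
/-- The redistributed vector `p^{i→j}` moves the mass of `p` from `i` to `j`. -/
def redistribute {K : ℕ} (p : Fin K → ℝ) (i j : Fin K) (k : Fin K) : ℝ :=
  if k = i then 0 else if k = j then p i + p j else p k

/-- Importance-weighted loss estimate: `ℓ̂_a(k) = ℓ(k)·1{k = a}/p(k)` for `k ∈ S`,
and `0` for `k ∉ S`, where `a` is the realized played arm. -/
noncomputable def lhat {K : ℕ} (S : Finset (Fin K)) (p ℓ : Fin K → ℝ) (a k : Fin K) : ℝ :=
  if k ∈ S then (if k = a then ℓ k / p k else 0) else 0

/-- Estimated expert loss of the pair `i → j`: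
`ℓ̂_a(i→j) = Σ_k p^{i→j}(k)·ℓ̂_a(k)` if `j ∈ S`, and `ℓ(a)` otherwise. -/
noncomputable def estLoss {K : ℕ} (S : Finset (Fin K)) (p ℓ : Fin K → ℝ) (a i j : Fin K) : ℝ :=
  if j ∈ S then ∑ k : Fin K, redistribute p i j k * lhat S p ℓ a k else ℓ a

/-!
For a fixed played arm `a ∈ S`, only the pairs `i → j` with `j ∈ S` see the importance weight:
there `ℓ̂_a(i→j) = p^{i→j}(a) ℓ(a) / p(a)`, while the other pairs pay `ℓ(a)`. Their `q̃`-weighted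
sum is `ℓ(a)/p(a) · Q̃ · Σ q(i,j) p^{i→j}(a) + ℓ(a) (1 - Q̃)`, and the fixed-point equation turns
the first sum into `p(a)`. Hence the aggregated estimate is exactly `ℓ(a)` for every played arm.
-/

open Finset

theorem sum_sum_ite_ne_eq_sum_offDiag {ι M : Type*} [Fintype ι] [DecidableEq ι]
    [AddCommMonoid M] (f : ι → ι → M) :
    ∑ i, ∑ j, (if i ≠ j then f i j else 0) = ∑ x ∈ (univ : Finset ι).offDiag, f x.1 x.2 := by
  rw [← sum_product' (f := fun i j => if i ≠ j then f i j else 0), ← sum_filter]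
  congr 1
  ext
  simp

section SIEXP3

variable {K : ℕ} {S : Finset (Fin K)} {p ℓ : Fin K → ℝ} {a : Fin K}

theorem estLoss_of_mem (ha : a ∈ S) (i : Fin K) {j : Fin K} (hj : j ∈ S) :
    estLoss S p ℓ a i j = redistribute p i j a * (ℓ a / p a) := by
  rw [estLoss, if_pos hj, sum_eq_single a]
  · simp [lhat, ha]
  · intro k _ hk
    simp [lhat, hk]
  · simp

theorem estLoss_of_notMem (i : Fin K) {j : Fin K} (hj : j ∉ S) : estLoss S p ℓ a i j = ℓ a := by
  simp [estLoss, hj]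

theorem qt_mul_estLoss_eq {qt q : Fin K → Fin K → ℝ} {Q : ℝ} (hQ : Q ≠ 0)
    (hqdef : ∀ i j, q i j = qt i j * (if j ∈ S then 1 else 0) / Q) (ha : a ∈ S) (i j : Fin K) :
    qt i j * estLoss S p ℓ a i j
      = ℓ a / p a * Q * (q i j * redistribute p i j a)
        + ℓ a * (qt i j - if j ∈ S then qt i j else 0) := by
  rw [hqdef]
  by_cases hj : j ∈ S
  · simp only [estLoss_of_mem ha i hj, if_pos hj]
    field_simp
    ring
  · simp only [estLoss_of_notMem i hj, if_neg hj]
    ring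

end SIEXP3

theorem expected_aggregated_estLoss_general
    (K : ℕ)
    (S : Finset (Fin K))
    (qt : Fin K → Fin K → ℝ)
    (hqtsum : ∑ i : Fin K, ∑ j : Fin K, (if i ≠ j then qt i j else 0) = 1)
    (Q : ℝ)
    (hQdef : Q = ∑ i : Fin K, ∑ j : Fin K, (if i ≠ j ∧ j ∈ S then qt i j else 0))
    (hQpos : 0 < Q)
    (q : Fin K → Fin K → ℝ)
    (hqdef : ∀ i j, q i j = qt i j * (if j ∈ S then 1 else 0) / Q)
    (p : Fin K → ℝ)
    (hpos : ∀ k ∈ S, 0 < p k)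
    (hfix : ∀ k, p k = ∑ i : Fin K, ∑ j : Fin K,
      if i ≠ j then q i j * redistribute p i j k else 0)
    (ℓ : Fin K → ℝ) :
    ∑ a ∈ S, p a * (∑ i : Fin K, ∑ j : Fin K,
        if i ≠ j then qt i j * estLoss S p ℓ a i j else 0)
      = ∑ k ∈ S, p k * ℓ k := by
  simp_rw [ite_and] at hQdef
  rw [sum_sum_ite_ne_eq_sum_offDiag] at hqtsum hQdef
  refine sum_congr rfl fun a ha => congrArg (p a * ·) ?_
  have hpa : p a ≠ 0 := (hpos a ha).ne'
  have hfixa := hfix a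
  rw [sum_sum_ite_ne_eq_sum_offDiag] at hfixa
  calc ∑ i, ∑ j, (if i ≠ j then qt i j * estLoss S p ℓ a i j else 0)
      = ∑ x ∈ univ.offDiag, (ℓ a / p a * Q * (q x.1 x.2 * redistribute p x.1 x.2 a)
          + ℓ a * (qt x.1 x.2 - if x.2 ∈ S then qt x.1 x.2 else 0)) := by
        rw [sum_sum_ite_ne_eq_sum_offDiag]
        exact sum_congr rfl fun x _ => qt_mul_estLoss_eq hQpos.ne' hqdef ha x.1 x.2
    _ = ℓ a / p a * Q * p a + ℓ a * (1 - Q) := by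
        rw [sum_add_distrib, ← mul_sum, ← mul_sum, sum_sub_distrib, ← hfixa, hqtsum, ← hQdef]
    _ = ℓ a := by
        field_simp
        ring

/-- **The expected aggregated estimated loss of SI-EXP3 equals the expected loss of the
played arm.** With weights `q̃` on pairs of distinct arms summing to one,
`Q̃ = Σ_{i≠j} q̃(i,j)·1{j ∈ S} > 0`, renormalized weights
`q(i,j) = q̃(i,j)·1{j ∈ S}/Q̃`, and a probability vector `p` supported exactly on `S`
solving the fixed-point equation `p = Σ_{i≠j} q(i,j)·p^{i→j}`:
`Σ_{a∈S} p(a)·Σ_{i≠j} q̃(i,j)·ℓ̂_a(i→j) = Σ_{k∈S} p(k)·ℓ(k)`. -/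
theorem expected_aggregated_estLoss
    (K : ℕ) (hK : 2 ≤ K)
    (S : Finset (Fin K)) (hS : S.Nonempty)
    (qt : Fin K → Fin K → ℝ)
    (hqt : ∀ i j, i ≠ j → 0 ≤ qt i j ∧ qt i j ≤ 1)
    (hqtsum : ∑ i : Fin K, ∑ j : Fin K, (if i ≠ j then qt i j else 0) = 1)
    (Q : ℝ)
    (hQdef : Q = ∑ i : Fin K, ∑ j : Fin K, (if i ≠ j ∧ j ∈ S then qt i j else 0))
    (hQpos : 0 < Q)
    (q : Fin K → Fin K → ℝ)
    (hqdef : ∀ i j, q i j = qt i j * (if j ∈ S then 1 else 0) / Q)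
    (p : Fin K → ℝ)
    (hpos : ∀ k ∈ S, 0 < p k) (hzero : ∀ k ∉ S, p k = 0)
    (hpsum : ∑ k, p k = 1)
    (hfix : ∀ k, p k = ∑ i : Fin K, ∑ j : Fin K,
      if i ≠ j then q i j * redistribute p i j k else 0)
    (ℓ : Fin K → ℝ) :
    ∑ a ∈ S, p a * (∑ i : Fin K, ∑ j : Fin K,
        if i ≠ j then qt i j * estLoss S p ℓ a i j else 0)
      = ∑ k ∈ S, p k * ℓ k :=
  expected_aggregated_estLoss_general K S qt hqtsum Q hQdef hQpos q hqdef p hpos hfix ℓ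
end

section
/- Let P : {1,...,K}² → ℝ satisfy P(a,b) + P(b,a) = 1 for all a, b, and suppose P admits a total ordering, i.e., there is a bijection ρ : {1,...,K} → {1,...,K} such that ρ(a) ≤ ρ(b) implies P(a,j) ≥ P(b,j) for all j. For each round t = 1,...,T, let A_t ⊆ {1,...,K}² be a symmetric nonempty set of available pairs ((i,j) ∈ A_t iff (j,i) ∈ A_t), with A_t(i) = {j : (i,j) ∈ A_t}, and let the learner play (i_t, j_t) ∈ A_t. Then the internal sleeping dueling-bandit regret satisfies the decomposition: Σ_{t=1}^T (max_{j*∈A_t(i_t)} P(j*, i_t) + max_{i*∈A_t(j_t)} P(i*, j_t) − 1) ≤ Σ_{i=1}^K Σ_{i'∈D_i} Σ_{t=1}^T (P(j_t, i) − P(j_t, i'))·1{i_t = i and i' ∈ A_t(j_t)} + Σ_{j=1}^K Σ_{j'∈D_j} Σ_{t=1}^T (P(i_t, j) − P(i_t, j'))·1{j_t = j and j' ∈ A_t(i_t)}, where D_i = {i' : P(i', j) ≥ P(i, j) for all j}. -/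
/-!
Fix a round. Since the arms are totally ordered by dominance, the nonempty set `A_t(j_t)`
contains an arm `i'` dominating all of it, in particular `i_t`, and the maximum of
`P(·, j_t)` over `A_t(j_t)` is attained at `i'`. As `P(a,b) + P(b,a) = 1`, domination in the
first coordinate is reversed domination in the second, so
`max − P(i_t, j_t) = P(j_t, i_t) − P(j_t, i')` is one summand of the round's share of the
first right-hand sum, all of whose summands are nonnegative. The same holds with the two
coordinates exchanged, and adding both bounds, `P(i_t, j_t) + P(j_t, i_t) = 1` turns the left
side into the round's regret.
-/

open scoped Classical

/-- The set of possible adversaries of arm `i` given the available pairs `A`: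
`A(i) = {j : (i,j) ∈ A}`. -/
def advSet {K : ℕ} (A : Finset (Fin K × Fin K)) (i : Fin K) : Finset (Fin K) :=
  Finset.univ.filter (fun j => (i, j) ∈ A)

theorem Finset.exists_mem_forall_dominates {α β γ : Type*} [LinearOrder β]
    (P : α → γ → ℝ) (ρ : α → β) (hρ : ∀ a b, ρ a ≤ ρ b → ∀ j, P b j ≤ P a j)
    (S : Finset α) (hS : S.Nonempty) :
    ∃ s ∈ S, ∀ x ∈ S, ∀ j, P x j ≤ P s j := by
  obtain ⟨s, hs, hmin⟩ := S.exists_min_image ρ hS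
  exact ⟨s, hs, fun x hx => hρ s x (hmin x hx)⟩

theorem apply_le_apply_of_dominates {α : Type*} {P : α → α → ℝ} (hP : ∀ a b, P a b + P b a = 1)
    {j j' : α} (hdom : ∀ a, P j a ≤ P j' a) (i : α) : P i j' ≤ P i j := by
  linarith [hP i j, hP i j', hdom i]

theorem sup'_sub_le_sum_dominating {α β : Type*} [Fintype α] [DecidableEq α] [LinearOrder β]
    (P : α → α → ℝ) (hP : ∀ a b, P a b + P b a = 1) (ρ : α → β)
    (hρ : ∀ a b, ρ a ≤ ρ b → ∀ j, P b j ≤ P a j)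
    (S : Finset α) (hS : S.Nonempty) (i : α) {j : α} (hj : j ∈ S)
    [DecidablePred fun j' => ∀ a, P j a ≤ P j' a] :
    S.sup' hS (fun x => P x i) - P j i ≤
      ∑ j' ∈ Finset.univ.filter (fun j' => ∀ a, P j a ≤ P j' a),
        (P i j - P i j') * (if j' ∈ S then 1 else 0) := by
  obtain ⟨s, hsS, hs⟩ := S.exists_mem_forall_dominates P ρ hρ hS
  have hsup : S.sup' hS (fun x => P x i) ≤ P s i := Finset.sup'_le _ _ fun x hx => hs x hx i
  have hterm_nonneg : ∀ j' ∈ Finset.univ.filter (fun j' => ∀ a, P j a ≤ P j' a),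
      0 ≤ (P i j - P i j') * (if j' ∈ S then 1 else 0) := by
    intro j' hj'
    have := apply_le_apply_of_dominates hP (Finset.mem_filter.mp hj').2 i
    split_ifs <;> linarith
  have hs_mem : s ∈ Finset.univ.filter (fun j' => ∀ a, P j a ≤ P j' a) := by
    simpa using hs j hj
  calc S.sup' hS (fun x => P x i) - P j i
      ≤ (P i j - P i s) * (if s ∈ S then 1 else 0) := by
        rw [if_pos hsS]; linarith [hP i j, hP i s]
    _ ≤ _ := Finset.single_le_sum hterm_nonneg hs_mem

theorem Finset.sum_sum_sum_mul_ite_eq_and {ι κ τ R : Type*} [Fintype ι] [DecidableEq ι]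
    [Fintype τ] [NonAssocSemiring R] (D : ι → Finset κ) (f : τ → ι → κ → R) (g : τ → ι) (q : τ → κ → Prop)
    [∀ t k, Decidable (q t k)] :
    ∑ i, ∑ k ∈ D i, ∑ t, f t i k * (if g t = i ∧ q t k then 1 else 0)
      = ∑ t, ∑ k ∈ D (g t), f t (g t) k * (if q t k then 1 else 0) := by
  simp_rw [ite_and, mul_ite, mul_zero]
  rw [Finset.sum_congr rfl fun i _ => Finset.sum_comm, Finset.sum_comm]
  refine Finset.sum_congr rfl fun t _ => ?_
  simp_rw [Finset.sum_ite_irrel, Finset.sum_const_zero]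
  exact Fintype.sum_ite_eq _ _

theorem sleeping_dueling_regret_decomposition_general
    (K T : ℕ) (P : Fin K → Fin K → ℝ)
    (hP : ∀ a b, P a b + P b a = 1)
    (ρ : Equiv.Perm (Fin K))
    (hρ : ∀ a b, ρ a ≤ ρ b → ∀ j, P b j ≤ P a j)
    (A : Fin T → Finset (Fin K × Fin K))
    (hsym : ∀ t (i j : Fin K), (i, j) ∈ A t ↔ (j, i) ∈ A t)
    (it jt : Fin T → Fin K)
    (hplay : ∀ t, (it t, jt t) ∈ A t)
    (h1 : ∀ t, (advSet (A t) (it t)).Nonempty)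
    (h2 : ∀ t, (advSet (A t) (jt t)).Nonempty) :
    ∑ t, ((advSet (A t) (it t)).sup' (h1 t) (fun jstar => P jstar (it t))
        + (advSet (A t) (jt t)).sup' (h2 t) (fun istar => P istar (jt t)) - 1)
      ≤ (∑ i : Fin K, ∑ i' ∈ Finset.univ.filter (fun i' => ∀ j, P i j ≤ P i' j),
            ∑ t, (P (jt t) i - P (jt t) i') *
              (if it t = i ∧ i' ∈ advSet (A t) (jt t) then 1 else 0))
        + (∑ j : Fin K, ∑ j' ∈ Finset.univ.filter (fun j' => ∀ i, P j i ≤ P j' i),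
            ∑ t, (P (it t) j - P (it t) j') *
              (if jt t = j ∧ j' ∈ advSet (A t) (it t) then 1 else 0)) := by
  rw [Finset.sum_sum_sum_mul_ite_eq_and, Finset.sum_sum_sum_mul_ite_eq_and,
    ← Finset.sum_add_distrib]
  refine Finset.sum_le_sum fun t _ => ?_
  have hjt : jt t ∈ advSet (A t) (it t) := by simp [advSet, hplay t]
  have hit : it t ∈ advSet (A t) (jt t) := by simp [advSet, (hsym t _ _).mp (hplay t)]
  have hj := sup'_sub_le_sum_dominating P hP ρ hρ _ (h1 t) (it t) hjt
  have hi := sup'_sub_le_sum_dominating P hP ρ hρ _ (h2 t) (jt t) hit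
  linarith [hP (it t) (jt t)]

/-- **Internal sleeping dueling-bandit regret decomposition.** Let `P` be a preference
matrix with `P(a,b) + P(b,a) = 1` admitting a total ordering `ρ`
(`ρ(a) ≤ ρ(b)` implies `P(a,j) ≥ P(b,j)` for all `j`).  At each round `t` a symmetric set
of available pairs `A_t` is revealed and the learner plays `(i_t, j_t) ∈ A_t`.  Then
`Σ_t (max_{j*∈A_t(i_t)} P(j*, i_t) + max_{i*∈A_t(j_t)} P(i*, j_t) − 1)
  ≤ Σ_i Σ_{i'∈D_i} Σ_t (P(j_t, i) − P(j_t, i'))·1{i_t = i ∧ i' ∈ A_t(j_t)}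
  + Σ_j Σ_{j'∈D_j} Σ_t (P(i_t, j) − P(i_t, j'))·1{j_t = j ∧ j' ∈ A_t(i_t)}`,
where `D_i = {i' : P(i', j) ≥ P(i, j) for all j}`. -/
theorem sleeping_dueling_regret_decomposition
    (K T : ℕ) (P : Fin K → Fin K → ℝ)
    (hP : ∀ a b, P a b + P b a = 1)
    (ρ : Equiv.Perm (Fin K))
    (hρ : ∀ a b, ρ a ≤ ρ b → ∀ j, P b j ≤ P a j)
    (A : Fin T → Finset (Fin K × Fin K))
    (hne : ∀ t, (A t).Nonempty)
    (hsym : ∀ t (i j : Fin K), (i, j) ∈ A t ↔ (j, i) ∈ A t)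
    (it jt : Fin T → Fin K)
    (hplay : ∀ t, (it t, jt t) ∈ A t)
    (h1 : ∀ t, (advSet (A t) (it t)).Nonempty)
    (h2 : ∀ t, (advSet (A t) (jt t)).Nonempty) :
    ∑ t, ((advSet (A t) (it t)).sup' (h1 t) (fun jstar => P jstar (it t))
        + (advSet (A t) (jt t)).sup' (h2 t) (fun istar => P istar (jt t)) - 1)
      ≤ (∑ i : Fin K, ∑ i' ∈ Finset.univ.filter (fun i' => ∀ j, P i j ≤ P i' j),
            ∑ t, (P (jt t) i - P (jt t) i') *
              (if it t = i ∧ i' ∈ advSet (A t) (jt t) then 1 else 0))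
        + (∑ j : Fin K, ∑ j' ∈ Finset.univ.filter (fun j' => ∀ i, P j i ≤ P j' i),
            ∑ t, (P (it t) j - P (it t) j') *
              (if jt t = j ∧ j' ∈ advSet (A t) (it t) then 1 else 0)) :=
  sleeping_dueling_regret_decomposition_general K T P hP ρ hρ A hsym it jt hplay h1 h2
end
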